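/- The set of finite infixes of the Thue–Morse sequence is neither a regular language nor a context-free language. -/

import Mathlib

/-!
Thue–Morse satisfies `t(2n) = t(n)` and `t(2n+1) = ¬t(n)`. Hence a factor of length `5p` and
period `p` halves to one of period `p/2` when `p` is even, and would force `t(2r) = t(2r+1)` when
`p` is odd; so `t` has no factor `u⁵` with `u` nonempty. On the other hand, the pumping lemmas
for finite automata and for context-free grammars, applied to the long infix `t(0)⋯t(p)`, yield
a nonempty `u` such that some word containing `u⁵` is again an infix.

The context-free pumping lemma comes from parse trees annotated with size and height: a yield
longer than `(M+1)^|N|` forces a path on which a nonterminal repeats, and in a parse tree of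
minimal size the repetition contributes a nonempty part of the yield.
-/

/-- A finite word `u` is an infix of the infinite word `w : ℕ → A`. -/
def IsInfInfix {A : Type*} (w : ℕ → A) (u : List A) : Prop :=
  ∃ i : ℕ, u = (List.range u.length).map fun j => w (i + j)

/-- The Thue–Morse sequence: `thueMorse n` is the parity of the number of ones in
the binary expansion of `n`. -/
def thueMorse (n : ℕ) : Bool := decide (Odd ((Nat.digits 2 n).count 1))

/-- A language is regular if it is accepted by a DFA with finitely many states. -/
def IsRegularLang {A : Type*} (L : Set (List A)) : Prop :=
  ∃ (Q : Type) (_ : Fintype Q) (M : DFA A Q), ∀ u : List A, u ∈ M.accepts ↔ u ∈ L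

section InfiniteWords

variable {α : Type*}

theorem isInfInfix_iff_getElem {w : ℕ → α} {u : List α} :
    IsInfInfix w u ↔ ∃ i, ∀ j (hj : j < u.length), u[j] = w (i + j) := by
  refine exists_congr fun i => ⟨fun h j hj => ?_, fun h => ?_⟩
  · rw [List.getElem_of_eq h]
    simp
  · exact List.ext_getElem (by simp) fun j hj _ => by simpa using h j hj

theorem isInfInfix_map_range (w : ℕ → α) (n : ℕ) : IsInfInfix w ((List.range n).map w) :=
  ⟨0, by simp⟩

theorem IsInfInfix.of_infix {w : ℕ → α} {u v : List α} (hv : IsInfInfix w v) (huv : u <:+: v) :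
    IsInfInfix w u := by
  obtain ⟨s, t, rfl⟩ := huv
  obtain ⟨i, hi⟩ := isInfInfix_iff_getElem.mp hv
  refine isInfInfix_iff_getElem.mpr ⟨i + s.length, fun j hj => ?_⟩
  have := hi (s.length + j) (by simp; omega)
  simpa [List.getElem_append_left hj, Nat.add_assoc] using this

end InfiniteWords

theorem List.getElem_flatten_replicate_add_length {α : Type*} (u : List α) (k j : ℕ)
    (hj : j + u.length < ((List.replicate (k + 1) u).flatten).length) :
    ((List.replicate (k + 1) u).flatten)[j + u.length] =
      ((List.replicate (k + 1) u).flatten)[j]'(by omega) := by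
  have hk : j < ((List.replicate k u).flatten).length := by simp [add_mul] at hj ⊢; omega
  rw [List.getElem_of_eq (by rw [List.replicate_succ, List.flatten_cons]),
    List.getElem_append_right (by omega)]
  conv_rhs => rw [List.getElem_of_eq (by rw [List.replicate_succ', List.flatten_append]),
    List.getElem_append_left (by simpa using hk)]
  simp

namespace ContextFreeGrammar

variable {T : Type*}

mutual
/-- `g` has a parse tree with root `s` and yield `w` that has `n` nodes and height `h`;
`HasParseForest` is the same for a list of roots, with total size and maximal height. -/
inductive HasParseTree (g : ContextFreeGrammar T) : Symbol T g.NT → List T → ℕ → ℕ → Prop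
  | leaf (t : T) : HasParseTree g (.terminal t) [t] 1 0
  | node {r : ContextFreeRule T g.NT} {w : List T} {n h : ℕ} :
      r ∈ g.rules → HasParseForest g r.output w n h →
      HasParseTree g (.nonterminal r.input) w (n + 1) (h + 1)
inductive HasParseForest (g : ContextFreeGrammar T) :
    List (Symbol T g.NT) → List T → ℕ → ℕ → Prop
  | nil : HasParseForest g [] [] 0 0
  | cons {s : Symbol T g.NT} {ss : List (Symbol T g.NT)} {w₁ w₂ : List T} {n₁ n₂ h₁ h₂ : ℕ} :
      HasParseTree g s w₁ n₁ h₁ → HasParseForest g ss w₂ n₂ h₂ →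
      HasParseForest g (s :: ss) (w₁ ++ w₂) (n₁ + n₂) (max h₁ h₂)
end

variable {g : ContextFreeGrammar T}

theorem hasParseForest_singleton_iff {s : Symbol T g.NT} {w : List T} {n h : ℕ} :
    HasParseForest g [s] w n h ↔ HasParseTree g s w n h := by
  refine ⟨fun d => ?_, fun d => by simpa using HasParseForest.cons d .nil⟩
  rcases d with _ | ⟨d, df⟩
  rcases df with _ | _
  simpa using d

theorem HasParseForest.append {ss₁ ss₂ : List (Symbol T g.NT)} {w₁ w₂ : List T}
    {n₁ n₂ h₁ h₂ : ℕ} :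
    HasParseForest g ss₁ w₁ n₁ h₁ → HasParseForest g ss₂ w₂ n₂ h₂ →
      HasParseForest g (ss₁ ++ ss₂) (w₁ ++ w₂) (n₁ + n₂) (max h₁ h₂)
  | .nil, d₂ => by simpa using d₂
  | .cons dt df, d₂ => by
    simpa [List.append_assoc, Nat.add_assoc, max_assoc] using HasParseForest.cons dt (df.append d₂)

theorem HasParseForest.exists_of_append {ss₂ : List (Symbol T g.NT)} {w : List T} :
    ∀ {ss₁ : List (Symbol T g.NT)} {n h : ℕ}, HasParseForest g (ss₁ ++ ss₂) w n h →
      ∃ w₁ w₂ n₁ n₂ h₁ h₂, w = w₁ ++ w₂ ∧ HasParseForest g ss₁ w₁ n₁ h₁ ∧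
        HasParseForest g ss₂ w₂ n₂ h₂
  | [], _, _, d => ⟨[], w, 0, _, 0, _, rfl, .nil, d⟩
  | _ :: _, _, _, .cons dt df => by
    obtain ⟨w₁, w₂, n₁, n₂, h₁, h₂, rfl, d₁, d₂⟩ := exists_of_append df
    exact ⟨_, w₂, _, n₂, _, h₂, (List.append_assoc ..).symm, .cons dt d₁, d₂⟩

theorem hasParseForest_map_terminal :
    ∀ w : List T, HasParseForest g (w.map .terminal) w w.length 0
  | [] => .nil
  | t :: w => by
    simpa [Nat.add_comm] using HasParseForest.cons (.leaf t) (hasParseForest_map_terminal w)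

theorem Derives.exists_hasParseForest {ss : List (Symbol T g.NT)} {w : List T}
    (hd : g.Derives ss (w.map .terminal)) : ∃ n h, HasParseForest g ss w n h := by
  induction hd using Relation.ReflTransGen.head_induction_on with
  | refl => exact ⟨_, _, hasParseForest_map_terminal w⟩
  | head hstep _ ih =>
    obtain ⟨n, h, d⟩ := ih
    obtain ⟨r, hr, hrw⟩ := hstep
    obtain ⟨p, q, rfl, rfl⟩ := hrw.exists_parts
    obtain ⟨w₁₂, w₃, _, _, _, _, rfl, d₁₂, d₃⟩ := d.exists_of_append
    obtain ⟨w₁, w₂, _, _, _, _, rfl, d₁, d₂⟩ := d₁₂.exists_of_append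
    have d' := d₁.append ((hasParseForest_singleton_iff.mpr (.node hr d₂)).append d₃)
    exact ⟨_, _, by simpa only [List.append_assoc] using d'⟩

mutual
theorem HasParseTree.derives {s : Symbol T g.NT} {w : List T} {n h : ℕ} :
    HasParseTree g s w n h → g.Derives [s] (w.map .terminal)
  | .leaf _ => Relation.ReflTransGen.refl
  | .node hr df => .head ⟨_, hr, .input_output⟩ df.derives

theorem HasParseForest.derives {ss : List (Symbol T g.NT)} {w : List T} {n h : ℕ} :
    HasParseForest g ss w n h → g.Derives ss (w.map .terminal)
  | .nil => Relation.ReflTransGen.refl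
  | .cons (ss := ss) (w₁ := w₁) dt df => by
    simpa using (dt.derives.append_right ss).trans (df.derives.append_left (w₁.map .terminal))
end

theorem mem_language_iff_exists_hasParseTree {w : List T} :
    w ∈ g.language ↔ ∃ n h, HasParseTree g (.nonterminal g.initial) w n h := by
  refine ⟨fun hw => ?_, fun ⟨_, _, d⟩ => d.derives⟩
  obtain ⟨n, h, d⟩ := Derives.exists_hasParseForest hw
  exact ⟨n, h, hasParseForest_singleton_iff.mp d⟩

def maxOutputLength (g : ContextFreeGrammar T) : ℕ := g.rules.sup fun r => r.output.length

mutual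
theorem HasParseTree.length_le {s : Symbol T g.NT} {w : List T} {n h : ℕ} :
    HasParseTree g s w n h → w.length ≤ (g.maxOutputLength + 1) ^ h
  | .leaf _ => by simp
  | .node (r := r) (h := h) hr df => calc
      w.length ≤ r.output.length * (g.maxOutputLength + 1) ^ h := df.length_le
      _ ≤ (g.maxOutputLength + 1) * (g.maxOutputLength + 1) ^ h := by
        gcongr
        exact (Finset.le_sup (f := fun r => r.output.length) hr).trans (Nat.le_succ _)
      _ = (g.maxOutputLength + 1) ^ (h + 1) := (pow_succ' ..).symm

theorem HasParseForest.length_le {ss : List (Symbol T g.NT)} {w : List T} {n h : ℕ} :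
    HasParseForest g ss w n h → w.length ≤ ss.length * (g.maxOutputLength + 1) ^ h
  | .nil => by simp
  | .cons (ss := ss) (w₁ := w₁) (w₂ := w₂) (h₁ := h₁) (h₂ := h₂) dt df => by
    have hM : 1 ≤ g.maxOutputLength + 1 := Nat.le_add_left 1 _
    have hw₁ : w₁.length ≤ (g.maxOutputLength + 1) ^ max h₁ h₂ :=
      dt.length_le.trans (Nat.pow_le_pow_right hM (le_max_left _ _))
    have hw₂ : w₂.length ≤ ss.length * (g.maxOutputLength + 1) ^ max h₁ h₂ :=
      df.length_le.trans (Nat.mul_le_mul_left _ (Nat.pow_le_pow_right hM (le_max_right _ _)))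
    simp only [List.length_append, List.length_cons]
    linarith
end

open scoped Classical in
noncomputable def inputs (g : ContextFreeGrammar T) : Finset g.NT :=
  g.rules.image ContextFreeRule.input

theorem HasParseTree.mem_inputs {A : g.NT} {w : List T} {n h : ℕ}
    (d : HasParseTree g (.nonterminal A) w n h) : A ∈ g.inputs := by
  rcases d with _ | ⟨hr, _⟩
  classical
  exact Finset.mem_image_of_mem _ hr

/-- A parse tree of `A` with yield `v ++ □ ++ z` and `c` nodes besides the hole `□`, which is a
leaf `B`; it is encoded by what plugging a parse tree of `B` into the hole produces. -/
def HasContext (g : ContextFreeGrammar T) (A : g.NT) (v : List T) (B : g.NT) (z : List T)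
    (c : ℕ) : Prop :=
  ∀ ⦃w m h⦄, HasParseTree g (.nonterminal B) w m h →
    ∃ h', HasParseTree g (.nonterminal A) (v ++ w ++ z) (c + m) h'

theorem HasContext.refl (A : g.NT) : g.HasContext A [] A [] 0 :=
  fun _ _ h d => ⟨h, by simpa using d⟩

theorem HasContext.trans {A B C : g.NT} {v z v' z' : List T} {c c' : ℕ}
    (h₁ : g.HasContext A v B z c) (h₂ : g.HasContext B v' C z' c') :
    g.HasContext A (v ++ v') C (z' ++ z) (c + c') := by
  intro w m h d
  obtain ⟨h', d'⟩ := h₂ d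
  obtain ⟨h'', d''⟩ := h₁ d'
  exact ⟨h'', by simpa [List.append_assoc, Nat.add_assoc] using d''⟩

theorem HasContext.flatten_replicate {C : g.NT} {v z : List T} {c : ℕ}
    (hC : g.HasContext C v C z c) :
    ∀ k, g.HasContext C (List.replicate k v).flatten C (List.replicate k z).flatten (k * c)
  | 0 => by simpa using HasContext.refl C
  | k + 1 => by
    rw [List.replicate_succ, List.replicate_succ', List.flatten_cons, List.flatten_append,
      List.flatten_singleton, Nat.succ_mul, Nat.add_comm]
    exact hC.trans (hC.flatten_replicate k)

theorem HasParseForest.exists_hasParseTree_of_height :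
    ∀ {ss : List (Symbol T g.NT)} {w : List T} {n h : ℕ}, HasParseForest g ss w n h → 0 < h →
      ∃ s v w' z c n', HasParseTree g s w' n' h ∧ w = v ++ w' ++ z ∧ n = c + n' ∧
        ∀ ⦃u m k⦄, HasParseTree g s u m k → ∃ k', HasParseForest g ss (v ++ u ++ z) (c + m) k'
  | _, _, _, _, .cons (w₁ := w₁) (w₂ := w₂) (n₁ := n₁) (n₂ := n₂) (h₁ := h₁) (h₂ := h₂) dt df,
    hh => by
    by_cases h₁₂ : h₂ ≤ h₁
    · refine ⟨_, [], w₁, w₂, n₂, n₁, by rwa [max_eq_left h₁₂], by simp, by omega,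
        fun u m k du => ⟨_, by simpa [Nat.add_comm] using HasParseForest.cons du df⟩⟩
    · obtain ⟨s, v, w', z, c, n', ds, rfl, rfl, fill⟩ :=
        df.exists_hasParseTree_of_height (by omega)
      refine ⟨s, w₁ ++ v, w', z, n₁ + c, n', by rwa [max_eq_right (by omega)], by simp,
        by omega, fun u m k du => ?_⟩
      obtain ⟨k', dk⟩ := fill du
      exact ⟨_, by simpa [Nat.add_assoc] using HasParseForest.cons dt dk⟩

theorem HasParseTree.exists_hasContext {A : g.NT} {w : List T} {n h : ℕ}
    (d : HasParseTree g (.nonterminal A) w n (h + 2)) :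
    ∃ B v w' z c n', 0 < c ∧ g.HasContext A v B z c ∧
      HasParseTree g (.nonterminal B) w' n' (h + 1) ∧ w = v ++ w' ++ z ∧ n = c + n' := by
  rcases d with _ | ⟨hr, df⟩
  obtain ⟨s, v, w', z, c, n', ds, rfl, rfl, fill⟩ := df.exists_hasParseTree_of_height (by omega)
  rcases ds with _ | ⟨hr', df'⟩
  refine ⟨_, v, w', z, c + 1, _, by omega, fun u m k du => ?_, .node hr' df', rfl, by omega⟩
  obtain ⟨k', dk⟩ := fill du
  exact ⟨_, by simpa [Nat.add_right_comm] using HasParseTree.node hr dk⟩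

/-- `w` is the yield of a parse tree of `A` with `n` nodes in which some nonterminal `C` is a
proper descendant of itself. -/
def IsPumpable (g : ContextFreeGrammar T) (A : g.NT) (w : List T) (n : ℕ) : Prop :=
  ∃ C v z c₁ v' z' c₂ x m k, g.HasContext A v C z c₁ ∧ g.HasContext C v' C z' c₂ ∧ 0 < c₂ ∧
    HasParseTree g (.nonterminal C) x m k ∧ w = v ++ v' ++ x ++ z' ++ z ∧ n = c₁ + c₂ + m

theorem IsPumpable.of_hasContext {A B : g.NT} {v w z : List T} {c n : ℕ}
    (hAB : g.HasContext A v B z c) (hB : g.IsPumpable B w n) :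
    g.IsPumpable A (v ++ w ++ z) (c + n) := by
  obtain ⟨C, v₁, z₁, c₁, v', z', c₂, x, m, k, hBC, hC, hc₂, dC, rfl, rfl⟩ := hB
  exact ⟨C, v ++ v₁, z₁ ++ z, c + c₁, v', z', c₂, x, m, k, hAB.trans hBC, hC, hc₂, dC, by simp,
    by omega⟩

theorem HasContext.isPumpable {A : g.NT} {v x z : List T} {c m k : ℕ}
    (hA : g.HasContext A v A z c) (hc : 0 < c) (d : HasParseTree g (.nonterminal A) x m k) :
    g.IsPumpable A (v ++ x ++ z) (c + m) :=
  ⟨A, [], [], 0, v, z, c, x, m, k, .refl A, hA, hc, d, by simp, by omega⟩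

/-- Pigeonhole along a path of maximal height, where `seen` collects the nonterminals met above `A`:
the path below `A` meets `h` nonterminals, too many to all be new. -/
theorem HasParseTree.isPumpable_or_hasContext_mem [DecidableEq g.NT] {A : g.NT} {w : List T}
    {n h : ℕ} (d : HasParseTree g (.nonterminal A) w n h) {seen : Finset g.NT} (hA : A ∉ seen)
    (hh : (g.inputs \ seen).card < h) :
    g.IsPumpable A w n ∨ ∃ D ∈ seen, ∃ v x z c m k, 0 < c ∧ g.HasContext A v D z c ∧
      HasParseTree g (.nonterminal D) x m k ∧ w = v ++ x ++ z ∧ n = c + m := by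
  induction h generalizing A w n seen with
  | zero => omega
  | succ h ih =>
    have hA' : A ∈ g.inputs \ seen := Finset.mem_sdiff.mpr ⟨d.mem_inputs, hA⟩
    have hcard : (g.inputs \ insert A seen).card < h := by
      rw [Finset.sdiff_insert, Finset.card_erase_of_mem hA']
      have := Finset.card_pos.mpr ⟨A, hA'⟩
      omega
    obtain ⟨h, rfl⟩ : ∃ h', h = h' + 1 := ⟨h - 1, by omega⟩
    obtain ⟨B, v, w', z, c, n', hc, hAB, dB, rfl, rfl⟩ := d.exists_hasContext
    by_cases hBA : B = A
    · subst hBA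
      exact .inl (hAB.isPumpable hc dB)
    by_cases hBs : B ∈ seen
    · exact .inr ⟨B, hBs, v, w', z, c, n', _, hc, hAB, dB, rfl, rfl⟩
    obtain hB | ⟨D, hD, v', x, z', c', m, k, hc', hBD, dD, rfl, rfl⟩ :=
      ih dB (seen := insert A seen) (by simp [hBA, hBs]) hcard
    · exact .inl (hB.of_hasContext hAB)
    obtain rfl | hD := Finset.mem_insert.mp hD
    · left
      simpa [List.append_assoc, Nat.add_assoc] using (hAB.trans hBD).isPumpable (by omega) dD
    · exact .inr ⟨D, hD, v ++ v', x, z' ++ z, c + c', m, k, by omega, hAB.trans hBD, dD, by simp,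
        by omega⟩

end ContextFreeGrammar

open ContextFreeGrammar in
theorem Language.IsContextFree.exists_pumping {T : Type*} {L : Language T}
    (hL : L.IsContextFree) :
    ∃ p, ∀ w ∈ L, p < w.length → ∃ a b c d e : List T, w = a ++ b ++ c ++ d ++ e ∧
      (b ≠ [] ∨ d ≠ []) ∧
      ∀ k, a ++ (List.replicate k b).flatten ++ c ++ (List.replicate k d).flatten ++ e ∈ L := by
  classical
  obtain ⟨g, rfl⟩ := hL
  refine ⟨(g.maxOutputLength + 1) ^ g.inputs.card, fun w hw hlen => ?_⟩
  have hP := mem_language_iff_exists_hasParseTree.mp hw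
  obtain ⟨h, d⟩ := Nat.find_spec hP
  have hh : g.inputs.card < h := by
    by_contra! hle
    have := d.length_le.trans (Nat.pow_le_pow_right (Nat.le_add_left 1 _) hle)
    omega
  obtain ⟨C, v, z, c₁, v', z', c₂, x, m, k, hS, hC, hc₂, dC, rfl, hn⟩ | ⟨_, hD, -⟩ :=
    d.isPumpable_or_hasContext_mem (Finset.notMem_empty _) (by simpa using hh)
  swap
  · simp at hD
  refine ⟨v, v', x, z', z, rfl, ?_, fun i => ?_⟩
  · -- otherwise cutting out the repetition would leave a smaller parse tree of `w`
    by_contra! hnil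
    obtain ⟨h', d'⟩ := hS dC
    have := Nat.find_min' hP ⟨h', by simpa [hnil] using d'⟩
    omega
  · obtain ⟨_, dC'⟩ := hC.flatten_replicate i dC
    obtain ⟨_, dS⟩ := hS dC'
    exact mem_language_iff_exists_hasParseTree.mpr ⟨_, _, by simpa [List.append_assoc] using dS⟩

open Set

theorem thueMorse_two_mul (n : ℕ) : thueMorse (2 * n) = thueMorse n := by
  rcases Nat.eq_zero_or_pos n with rfl | hn
  · rfl
  · simp [thueMorse, Nat.digits_def' one_lt_two (by omega : 0 < 2 * n), hn.ne']

theorem thueMorse_two_mul_add_one (n : ℕ) : thueMorse (2 * n + 1) = !thueMorse n := by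
  have hdigits : Nat.digits 2 (2 * n + 1) = 1 :: Nat.digits 2 n := by
    rw [Nat.digits_def' one_lt_two (by omega), show (2 * n + 1) % 2 = 1 by omega,
      show (2 * n + 1) / 2 = n by omega]
  rw [thueMorse, thueMorse, hdigits]
  simp [Nat.odd_add_one, -Nat.not_odd_iff_even]

theorem thueMorse_two_mul_add_one_ne (n : ℕ) : thueMorse (2 * n + 1) ≠ thueMorse (2 * n) := by
  rw [thueMorse_two_mul, thueMorse_two_mul_add_one]
  cases thueMorse n <;> decide

theorem thueMorse_periodicOn_of_two_mul {i q : ℕ}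
    (h : ∀ n ∈ Ico i (i + 4 * (2 * q)), thueMorse (n + 2 * q) = thueMorse n) :
    ∀ n ∈ Ico ((i + 1) / 2) ((i + 1) / 2 + 4 * q), thueMorse (n + q) = thueMorse n := by
  rintro n ⟨hn₁, hn₂⟩
  have := h (2 * n) ⟨by omega, by omega⟩
  rwa [← mul_add, thueMorse_two_mul, thueMorse_two_mul] at this

theorem thueMorse_not_periodicOn_of_odd (i q : ℕ) :
    ¬ ∀ n ∈ Ico i (i + 4 * (2 * q + 1)), thueMorse (n + (2 * q + 1)) = thueMorse n := by
  intro h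
  have shift_even : ∀ m, i ≤ 2 * m → 2 * m < i + 4 * (2 * q + 1) →
      thueMorse (m + q) = !thueMorse m := by
    intro m hm₁ hm₂
    have := h (2 * m) ⟨hm₁, hm₂⟩
    rwa [show 2 * m + (2 * q + 1) = 2 * (m + q) + 1 by ring, thueMorse_two_mul_add_one,
      thueMorse_two_mul, Bool.not_eq_eq_eq_not] at this
  have shift_odd : ∀ m, i ≤ 2 * m → 2 * m + 1 < i + 4 * (2 * q + 1) →
      thueMorse (m + q + 1) = !thueMorse m := by
    intro m hm₁ hm₂
    have := h (2 * m + 1) ⟨by omega, hm₂⟩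
    rwa [show 2 * m + 1 + (2 * q + 1) = 2 * (m + q + 1) by ring, thueMorse_two_mul,
      thueMorse_two_mul_add_one] at this
  -- Combining the two shifts, `thueMorse` would be constant on `[m, m + 2]` for `m = ⌈i/2⌉`.
  set m := (i + 1) / 2
  rcases Nat.eq_zero_or_pos q with rfl | hq
  · have := shift_even m (by omega) (by omega)
    simp at this
  have step : ∀ k < 2, thueMorse (m + k + 1) = thueMorse (m + k) := by
    intro k hk
    have h₁ := shift_even (m + k + 1) (by omega) (by omega)
    have h₂ := shift_odd (m + k) (by omega) (by omega)
    rw [show m + k + 1 + q = m + k + q + 1 by ring, h₂] at h₁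
    simpa using h₁.symm
  obtain ⟨r, hr⟩ : ∃ r, 2 * r = m ∨ 2 * r = m + 1 := ⟨(m + 1) / 2, by omega⟩
  rcases hr with hr | hr
  · exact thueMorse_two_mul_add_one_ne r (by simpa [← hr] using step 0 (by omega))
  · exact thueMorse_two_mul_add_one_ne r (by simpa [← hr] using step 1 (by omega))

theorem thueMorse_not_periodicOn {p : ℕ} (hp : 0 < p) (i : ℕ) :
    ¬ ∀ n ∈ Ico i (i + 4 * p), thueMorse (n + p) = thueMorse n := by
  induction p using Nat.strong_induction_on generalizing i with
  | _ p ih =>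
  obtain ⟨q, rfl | rfl⟩ := Nat.even_or_odd' p
  · exact fun h => ih q (by omega) (by omega) _ (thueMorse_periodicOn_of_two_mul h)
  · exact thueMorse_not_periodicOn_of_odd i q

theorem not_isInfInfix_thueMorse_flatten_replicate_five {u : List Bool} (hu : u ≠ []) :
    ¬ IsInfInfix thueMorse (List.replicate 5 u).flatten := by
  rw [isInfInfix_iff_getElem]
  rintro ⟨i, hi⟩
  refine thueMorse_not_periodicOn (List.length_pos_iff.mpr hu) i ?_
  rintro n ⟨hn₁, hn₂⟩
  obtain ⟨j, rfl⟩ := Nat.exists_eq_add_of_le hn₁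
  have hlen : ((List.replicate 5 u).flatten).length = 5 * u.length := by simp; omega
  rw [← hi j (by omega), Nat.add_assoc, ← hi (j + u.length) (by omega),
    List.getElem_flatten_replicate_add_length]

open Computability in
theorem not_isRegularLang_thueMorse_infixes : ¬ IsRegularLang {u | IsInfInfix thueMorse u} := by
  rintro ⟨Q, _, M, hM⟩
  obtain ⟨a, b, c, -, -, hb, hpump⟩ :=
    M.pumping_lemma ((hM _).mpr (isInfInfix_map_range thueMorse (Fintype.card Q))) (by simp)
  have hb₅ : (List.replicate 5 b).flatten ∈ ({b} : Language Bool)∗ :=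
    Language.mem_kstar.mpr ⟨_, rfl, fun y hy => List.eq_of_mem_replicate hy⟩
  have hmem := hpump (Language.append_mem_mul (Language.append_mem_mul rfl hb₅) rfl)
  exact not_isInfInfix_thueMorse_flatten_replicate_five hb
    (((hM _).mp hmem).of_infix (List.infix_append _ _ _))

theorem not_isContextFree_thueMorse_infixes :
    ¬ Language.IsContextFree ({u | IsInfInfix thueMorse u} : Language Bool) := by
  intro hL
  obtain ⟨p, hp⟩ := hL.exists_pumping
  obtain ⟨a, b, c, d, e, -, hbd, hpump⟩ :=
    hp _ (isInfInfix_map_range thueMorse (p + 1)) (by simp)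
  have hinf : IsInfInfix thueMorse
      (a ++ (List.replicate 5 b).flatten ++ c ++ (List.replicate 5 d).flatten ++ e) := hpump 5
  rcases hbd with hb | hd
  · exact not_isInfInfix_thueMorse_flatten_replicate_five hb
      (hinf.of_infix ⟨a, c ++ (List.replicate 5 d).flatten ++ e, by simp⟩)
  · exact not_isInfInfix_thueMorse_flatten_replicate_five hd
      (hinf.of_infix (List.infix_append _ _ _))

/-- The set of finite infixes of the Thue–Morse sequence is
neither regular nor context-free. -/
theorem thueMorse_infixes_not_regular_not_contextFree :
    ¬ IsRegularLang {u | IsInfInfix thueMorse u} ∧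
    ¬ Language.IsContextFree ({u | IsInfInfix thueMorse u} : Language Bool) :=
  ⟨not_isRegularLang_thueMorse_infixes, not_isContextFree_thueMorse_infixes⟩
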